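/- Assume k(c) > 0 for all c ∈ [0,1]. Then F is a classical solution of the Hamilton–Jacobi–Bellman equation: for all (x, c) ∈ ℝ × [0,1], F_c(x, c) ≥ −x and (1/2)σ² F_{xx}(x, c) + θ(μ − x) F_x(x, c) − λ F(x, c) ≥ −λ x Φ(c); moreover F_c(x, c) = −x whenever x ≤ β*(c), and (1/2)σ² F_{xx}(x, c) + θ(μ − x) F_x(x, c) − λ F(x, c) = −λ x Φ(c) whenever x ≥ β*(c). In particular, max{ λF − (1/2)σ²F_{xx} − θ(μ − x)F_x − λxΦ(c), −F_c − x } = 0 at every point of ℝ × [0,1]. -/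

import Mathlib

open MeasureTheory Real Set Filter

/-- The (positive multiple of the) strictly decreasing fundamental solution `φ_λ` of the
Ornstein–Uhlenbeck equation `(1/2)σ² f'' + θ(μ - x) f' = λ f`, written as the integral
`φ(x) = ∫₀^∞ t^(λ/θ - 1) exp(-t²/2 - a t (x - μ)) dt` with `a = √(2θ)/σ`. -/
noncomputable def OUphi (lam th mu sig : ℝ) (x : ℝ) : ℝ :=
  ∫ t in Set.Ioi (0:ℝ),
    t ^ (lam / th - 1) * Real.exp (-t ^ 2 / 2 - Real.sqrt (2 * th) / sig * t * (x - mu))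

/-- `k(c) = λ + θ + λ Φ'(c)`. -/
noncomputable def kfun (lam th : ℝ) (Phi : ℝ → ℝ) (c : ℝ) : ℝ :=
  lam + th + lam * deriv Phi c

/-- `G(x; c) = μ(k(c) - θ)/λ + k(c)(x - μ)/(λ + θ)`. -/
noncomputable def Gfun (lam th mu : ℝ) (Phi : ℝ → ℝ) (x c : ℝ) : ℝ :=
  mu * (kfun lam th Phi c - th) / lam + kfun lam th Phi c * (x - mu) / (lam + th)

/-- `x₀(c) = -θμΦ'(c)/k(c)`. -/
noncomputable def x0fun (lam th mu : ℝ) (Phi : ℝ → ℝ) (c : ℝ) : ℝ :=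
  -(th * mu * deriv Phi c) / kfun lam th Phi c

/-- The smooth-fit function `H(x;c) = (k(c)/(λ+θ)) φ(x) - G(x;c) φ'(x)`. -/
noncomputable def Hfun (lam th mu sig : ℝ) (Phi : ℝ → ℝ) (x c : ℝ) : ℝ :=
  kfun lam th Phi c / (lam + th) * OUphi lam th mu sig x
    - Gfun lam th mu Phi x c * deriv (OUphi lam th mu sig) x

/-- The candidate value function of the optimal stopping problem:
`u(x;c) = G(x;c) - (G(β;c)/φ(β)) φ(x)` for `x > β` and `u(x;c) = 0` for `x ≤ β`. -/
noncomputable def ufun (lam th mu sig : ℝ) (Phi : ℝ → ℝ) (b : ℝ) (x c : ℝ) : ℝ :=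
  if b < x then
    Gfun lam th mu Phi x c
      - Gfun lam th mu Phi b c / OUphi lam th mu sig b * OUphi lam th mu sig x
  else 0

/-- The candidate value function of the control problem:
`F(x,c) = x(1-c) - ∫_c^1 u(x;y) dy`, where `u(·;y)` uses the boundary `β(y)`. -/
noncomputable def Ffun (lam th mu sig : ℝ) (Phi : ℝ → ℝ) (beta : ℝ → ℝ) (x c : ℝ) : ℝ :=
  x * (1 - c) - ∫ y in c..(1:ℝ), ufun lam th mu sig Phi (beta y) x y

/-!
For fixed `c`, `u(·; c)` is the value of an optimal stopping problem with payoff `G(·; c)`: above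
`β(c)` it equals `G - (G(β)/φ(β)) φ`, which is strictly convex (`G(β) < 0`, `φ'' > 0`), vanishes to
first order at `β(c)` (the smooth-fit condition is `H(β(c); c) = 0`) and solves
`(L - λ) u = θμ - k(c) x` there, `L` being the Ornstein–Uhlenbeck generator; below `β(c)` it is `0`.
Differentiating `F = x(1 - c) - ∫_c^1 u(x; y) dy` twice under the integral sign (`u_x` is Lipschitz
in `x`, and `u_xx` jumps only where `β(y) = x`, a single `y` since `β` is strictly decreasing) and
using `∫_c^1 k = (λ + θ)(1 - c) - λ Φ(c)` gives
`(L - λ) F + λ x Φ(c) = ∫_c^1 1{x ≤ β(y)} (θμ - k(y) x) dy`.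
The integrand is nonnegative since `β(y) < θμ/k(y)`, and vanishes for `y > c` once `x ≥ β(c)`.
In the `c`-direction, `F_c = -x + u(x; c)` with `u ≥ 0`, and `u(x; c) = 0` for `x ≤ β(c)`.
Continuity of `β`, needed for the integrals, follows from the sign change of `H(·; c)` at `β(c)`.
-/

open Topology Metric

theorem ae_ne_of_injOn {α β : Type*} [MeasurableSpace α] {μ : Measure α} [NullSingletonClass μ]
    {f : α → β} {s : Set α} (hf : InjOn f s) (x : β) : ∀ᵐ y ∂μ, y ∈ s → f y ≠ x := by
  have : μ {y | y ∈ s ∧ f y = x} = 0 :=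
    Subsingleton.measure_zero (fun y₁ h₁ y₂ h₂ => hf h₁.1 h₂.1 (h₁.2.trans h₂.2.symm)) μ
  filter_upwards [measure_eq_zero_iff_ae_notMem.1 this] with y hy hys hfy using hy ⟨hys, hfy⟩

theorem aestronglyMeasurable_ite_lt_of_antitoneOn {μ : Measure ℝ} {s : Set ℝ}
    (hs : MeasurableSet s) {f g : ℝ → ℝ} (hf : AntitoneOn f s)
    (hg : AEStronglyMeasurable g (μ.restrict s)) (x : ℝ) :
    AEStronglyMeasurable (fun y => if f y < x then g y else 0) (μ.restrict s) := by
  have hind : MonotoneOn (fun y => if f y < x then (1:ℝ) else 0) s := by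
    intro y₁ h₁ y₂ h₂ hy
    dsimp only
    split_ifs with hy₁ hy₂ <;> norm_num
    exact hy₂ ((hf h₁ h₂ hy).trans_lt hy₁)
  refine (hg.mul (aemeasurable_restrict_of_monotoneOn hs hind).aestronglyMeasurable).congr
    (Eventually.of_forall fun y => by simp only [Pi.mul_apply, mul_ite, mul_one, mul_zero])

theorem hasDerivAt_intervalIntegral_of_continuousOn {f f' : ℝ → ℝ → ℝ} {a b : ℝ}
    (hf : ContinuousOn (fun p : ℝ × ℝ => f p.1 p.2) (univ ×ˢ uIcc a b))
    (hf' : ContinuousOn (fun p : ℝ × ℝ => f' p.1 p.2) (univ ×ˢ uIcc a b))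
    (hd : ∀ y ∈ uIcc a b, ∀ x, HasDerivAt (f · y) (f' x y) x) (x₀ : ℝ) :
    HasDerivAt (fun x => ∫ y in a..b, f x y) (∫ y in a..b, f' x₀ y) x₀ := by
  have hsec {g : ℝ → ℝ → ℝ} (hg : ContinuousOn (fun p : ℝ × ℝ => g p.1 p.2) (univ ×ˢ uIcc a b))
      (x : ℝ) : ContinuousOn (g x) (uIcc a b) :=
    hg.comp (continuousOn_const.prodMk continuousOn_id) fun y hy => ⟨trivial, hy⟩
  obtain ⟨C, hC⟩ := ((isCompact_closedBall x₀ 1).prod isCompact_uIcc).exists_bound_of_continuousOn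
    (hf'.mono (prod_mono (subset_univ _) subset_rfl))
  exact (intervalIntegral.hasDerivAt_integral_of_dominated_loc_of_deriv_le (bound := fun _ => C)
    (ball_mem_nhds x₀ one_pos)
    (Eventually.of_forall fun x => ((hsec hf x).mono uIoc_subset_uIcc).aestronglyMeasurable
      measurableSet_uIoc)
    ((hsec hf x₀).intervalIntegrable)
    (((hsec hf' x₀).mono uIoc_subset_uIcc).aestronglyMeasurable measurableSet_uIoc)
    (Eventually.of_forall fun y hy x hx =>
      hC (x, y) ⟨ball_subset_closedBall hx, uIoc_subset_uIcc hy⟩)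
    intervalIntegrable_const
    (Eventually.of_forall fun y hy x _ => hd y (uIoc_subset_uIcc hy) x)).2

section OUIntegral

variable {p : ℝ}

noncomputable def ouIntegral (p a mu x : ℝ) : ℝ :=
  ∫ t in Ioi (0:ℝ), t ^ p * exp (-t ^ 2 / 2 - a * t * (x - mu))

theorem neg_sq_div_two_sub_mul (a mu x t : ℝ) :
    -t ^ 2 / 2 - a * t * (x - mu) = -t ^ 2 / 2 + -a * (x - mu) * t := by ring

theorem integrableOn_rpow_mul_exp_neg_sq_add (hp : -1 < p) (b : ℝ) :
    IntegrableOn (fun t : ℝ => t ^ p * exp (-t ^ 2 / 2 + b * t)) (Ioi 0) := by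
  refine ((integrableOn_rpow_mul_exp_neg_mul_sq (by norm_num : (0:ℝ) < 1 / 4) hp).const_mul
    (exp (b ^ 2))).mono' (by fun_prop) ?_
  filter_upwards [ae_restrict_mem measurableSet_Ioi] with t (ht : 0 < t)
  rw [norm_of_nonneg (by positivity)]
  calc t ^ p * exp (-t ^ 2 / 2 + b * t) ≤ t ^ p * exp (b ^ 2 + -(1 / 4) * t ^ 2) :=
        mul_le_mul_of_nonneg_left (exp_le_exp.2 (by nlinarith [sq_nonneg (t / 2 - b)]))
          (by positivity)
    _ = exp (b ^ 2) * (t ^ p * exp (-(1 / 4) * t ^ 2)) := by rw [exp_add]; ring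

theorem integrableOn_ouIntegrand (hp : -1 < p) (a mu x : ℝ) :
    IntegrableOn (fun t : ℝ => t ^ p * exp (-t ^ 2 / 2 - a * t * (x - mu))) (Ioi 0) := by
  simpa only [neg_sq_div_two_sub_mul] using integrableOn_rpow_mul_exp_neg_sq_add hp _

theorem tendsto_rpow_mul_exp_neg_sq_add_atTop (s b : ℝ) :
    Tendsto (fun t : ℝ => t ^ s * exp (-t ^ 2 / 2 + b * t)) atTop (𝓝 0) := by
  refine squeeze_zero' ?_ ?_ (tendsto_rpow_mul_exp_neg_mul_atTop_nhds_zero s 1 one_pos)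
  · filter_upwards [eventually_ge_atTop 0] with t ht
    positivity
  · filter_upwards [eventually_ge_atTop (max 0 (2 * (b + 1)))] with t ht
    have ht0 : 0 ≤ t := (le_max_left _ _).trans ht
    have htb : 2 * (b + 1) ≤ t := (le_max_right _ _).trans ht
    gcongr
    nlinarith

theorem ouIntegral_pos (hp : -1 < p) (a mu x : ℝ) : 0 < ouIntegral p a mu x := by
  rw [ouIntegral, setIntegral_pos_iff_support_of_nonneg_ae _ (integrableOn_ouIntegrand hp a mu x)]
  · rw [inter_eq_right.2 fun t (ht : t ∈ Ioi 0) =>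
      Function.mem_support.2 (by have : 0 < t := ht; positivity)]
    simp
  · filter_upwards [ae_restrict_mem measurableSet_Ioi] with t (ht : 0 < t)
    positivity

theorem hasDerivAt_ouIntegral (hp : -1 < p) (a mu x₀ : ℝ) :
    HasDerivAt (ouIntegral p a mu) (-a * ouIntegral (p + 1) a mu x₀) x₀ := by
  set B := |a| * (|x₀ - mu| + 1)
  have key := hasDerivAt_integral_of_dominated_loc_of_deriv_le (x₀ := x₀)
    (μ := volume.restrict (Ioi 0)) (ball_mem_nhds x₀ one_pos)
    (F := fun x t => t ^ p * exp (-t ^ 2 / 2 - a * t * (x - mu)))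
    (F' := fun x t => -a * (t ^ (p + 1) * exp (-t ^ 2 / 2 - a * t * (x - mu))))
    (bound := fun t => |a| * (t ^ (p + 1) * exp (-t ^ 2 / 2 + B * t)))
    (Eventually.of_forall fun x => by fun_prop) (integrableOn_ouIntegrand hp a mu x₀)
    (by fun_prop) ?bound
    ((integrableOn_rpow_mul_exp_neg_sq_add (by linarith) B).const_mul |a|) ?deriv
  case bound =>
    filter_upwards [ae_restrict_mem measurableSet_Ioi] with t (ht : 0 < t) x hx
    have hx' : |x - mu| ≤ |x₀ - mu| + 1 := by
      have := abs_sub_abs_le_abs_sub (x - mu) (x₀ - mu)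
      rw [mem_ball, dist_eq_norm, norm_eq_abs] at hx
      rw [show x - mu - (x₀ - mu) = x - x₀ by ring] at this
      linarith
    have hexp : -a * t * (x - mu) ≤ B * t := by
      have h1 : -(a * (x - mu)) ≤ |a| * |x - mu| := abs_mul a (x - mu) ▸ neg_le_abs _
      have h2 : |a| * |x - mu| ≤ B := mul_le_mul_of_nonneg_left hx' (abs_nonneg a)
      nlinarith
    rw [norm_mul, norm_neg, norm_eq_abs, norm_eq_abs,
      abs_of_nonneg (by positivity : 0 ≤ t ^ (p + 1) * exp (-t ^ 2 / 2 - a * t * (x - mu)))]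
    gcongr
    linarith
  case deriv =>
    filter_upwards [ae_restrict_mem measurableSet_Ioi] with t (ht : 0 < t) x _
    have := ((((hasDerivAt_id x).sub_const mu).const_mul (a * t)).const_sub
      (-t ^ 2 / 2)).exp.const_mul (t ^ p)
    simp only [id, mul_one] at this
    refine this.congr_deriv ?_
    rw [rpow_add ht, rpow_one]
    ring
  have h := key.2
  rw [integral_const_mul] at h
  exact h

theorem ouIntegral_recurrence (hp : -1 < p) (a mu x : ℝ) :
    ouIntegral (p + 2) a mu x + a * (x - mu) * ouIntegral (p + 1) a mu x
      = (p + 1) * ouIntegral p a mu x := by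
  -- integrate `d/dt [t ^ (p + 1) E t]` over `(0, ∞)`: both boundary terms vanish
  let E : ℝ → ℝ := fun t => exp (-t ^ 2 / 2 - a * t * (x - mu))
  have i0 : IntegrableOn (fun t => (p + 1) * (t ^ p * E t)) (Ioi 0) :=
    (integrableOn_ouIntegrand hp a mu x).const_mul (p + 1)
  have i1 : IntegrableOn (fun t => a * (x - mu) * (t ^ (p + 1) * E t)) (Ioi 0) :=
    (integrableOn_ouIntegrand (by linarith) a mu x).const_mul (a * (x - mu))
  have i2 : IntegrableOn (fun t => t ^ (p + 2) * E t) (Ioi 0) :=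
    integrableOn_ouIntegrand (by linarith) a mu x
  have i02 : IntegrableOn (fun t => (p + 1) * (t ^ p * E t) - t ^ (p + 2) * E t) (Ioi 0) :=
    i0.sub i2
  have hderiv : ∀ t ∈ Ioi (0:ℝ), HasDerivAt (fun t => t ^ (p + 1) * E t)
      ((p + 1) * (t ^ p * E t) - t ^ (p + 2) * E t - a * (x - mu) * (t ^ (p + 1) * E t)) t := by
    intro t (ht : 0 < t)
    have hg : HasDerivAt (fun s : ℝ => -s ^ 2 / 2 - a * s * (x - mu)) (-t - a * (x - mu)) t := by
      have := (((hasDerivAt_pow 2 t).div_const 2).const_sub 0).sub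
        ((hasDerivAt_mul_const (x - mu)).const_mul a)
      refine (this.congr_deriv (by norm_num)).congr_of_eventuallyEq
        (Eventually.of_forall fun s => ?_)
      simp only [Pi.sub_apply]
      ring
    refine ((hasDerivAt_rpow_const (p := p + 1) (Or.inl ht.ne')).mul hg.exp).congr_deriv ?_
    rw [show p + 2 = p + 1 + 1 by ring, rpow_add ht (p + 1), rpow_add ht p, rpow_one,
      add_sub_cancel_right]
    ring
  have hlim : Tendsto (fun t => t ^ (p + 1) * E t) atTop (𝓝 0) := by
    simpa only [E, neg_sq_div_two_sub_mul] using
      tendsto_rpow_mul_exp_neg_sq_add_atTop (p + 1) (-a * (x - mu))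
  have hcont : ContinuousWithinAt (fun t => t ^ (p + 1) * E t) (Ici 0) 0 :=
    ((continuousAt_rpow_const 0 _ (Or.inr (by linarith))).mul (by fun_prop)).continuousWithinAt
  have key := integral_Ioi_of_hasDerivAt_of_tendsto hcont hderiv (i02.sub i1) hlim
  rw [integral_sub i02 i1, integral_sub i0 i2, integral_const_mul, integral_const_mul,
    zero_rpow (by linarith), zero_mul, sub_zero] at key
  unfold ouIntegral
  linarith

end OUIntegral

noncomputable def OUphiDeriv (lam th mu sig x : ℝ) : ℝ :=
  -(Real.sqrt (2 * th) / sig) * ouIntegral (lam / th - 1 + 1) (Real.sqrt (2 * th) / sig) mu x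

noncomputable def OUphiDeriv2 (lam th mu sig x : ℝ) : ℝ :=
  (Real.sqrt (2 * th) / sig) ^ 2 * ouIntegral (lam / th - 1 + 2) (Real.sqrt (2 * th) / sig) mu x

section OUphi

variable {lam th mu sig : ℝ}

theorem OUphi_eq_ouIntegral :
    OUphi lam th mu sig = ouIntegral (lam / th - 1) (Real.sqrt (2 * th) / sig) mu := rfl

theorem neg_one_lt_div_sub_one (hlam : 0 < lam) (hth : 0 < th) : -1 < lam / th - 1 := by
  linarith [div_pos hlam hth]

theorem OUphi_pos (hlam : 0 < lam) (hth : 0 < th) (x : ℝ) : 0 < OUphi lam th mu sig x :=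
  ouIntegral_pos (neg_one_lt_div_sub_one hlam hth) _ _ _

theorem hasDerivAt_OUphi (hlam : 0 < lam) (hth : 0 < th) (x : ℝ) :
    HasDerivAt (OUphi lam th mu sig) (OUphiDeriv lam th mu sig x) x :=
  hasDerivAt_ouIntegral (neg_one_lt_div_sub_one hlam hth) _ _ x

theorem deriv_OUphi (hlam : 0 < lam) (hth : 0 < th) :
    deriv (OUphi lam th mu sig) = OUphiDeriv lam th mu sig :=
  funext fun x => (hasDerivAt_OUphi hlam hth x).deriv

theorem hasDerivAt_OUphiDeriv (hlam : 0 < lam) (hth : 0 < th) (x : ℝ) :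
    HasDerivAt (OUphiDeriv lam th mu sig) (OUphiDeriv2 lam th mu sig x) x := by
  have := (hasDerivAt_ouIntegral (p := lam / th - 1 + 1)
    (by linarith [neg_one_lt_div_sub_one hlam hth])
    (Real.sqrt (2 * th) / sig) mu x).const_mul (-(Real.sqrt (2 * th) / sig))
  rw [show lam / th - 1 + 1 + 1 = lam / th - 1 + 2 by ring] at this
  exact this.congr_deriv (by rw [OUphiDeriv2]; ring)

theorem OUphiDeriv_neg (hlam : 0 < lam) (hth : 0 < th) (hsig : 0 < sig) (x : ℝ) :
    OUphiDeriv lam th mu sig x < 0 := by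
  have ha : 0 < Real.sqrt (2 * th) / sig := by positivity
  have := ouIntegral_pos (p := lam / th - 1 + 1) (by linarith [neg_one_lt_div_sub_one hlam hth])
    (Real.sqrt (2 * th) / sig) mu x
  rw [OUphiDeriv, neg_mul]
  exact neg_neg_of_pos (mul_pos ha this)

theorem OUphiDeriv2_pos (hlam : 0 < lam) (hth : 0 < th) (hsig : 0 < sig) (x : ℝ) :
    0 < OUphiDeriv2 lam th mu sig x := by
  have ha : 0 < Real.sqrt (2 * th) / sig := by positivity
  have := ouIntegral_pos (p := lam / th - 1 + 2) (by linarith [neg_one_lt_div_sub_one hlam hth])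
    (Real.sqrt (2 * th) / sig) mu x
  rw [OUphiDeriv2]
  positivity

theorem continuous_OUphi (hlam : 0 < lam) (hth : 0 < th) : Continuous (OUphi lam th mu sig) :=
  continuous_iff_continuousAt.2 fun x => (hasDerivAt_OUphi hlam hth x).continuousAt

theorem continuous_OUphiDeriv (hlam : 0 < lam) (hth : 0 < th) :
    Continuous (OUphiDeriv lam th mu sig) :=
  continuous_iff_continuousAt.2 fun x => (hasDerivAt_OUphiDeriv hlam hth x).continuousAt

theorem continuous_OUphiDeriv2 (hlam : 0 < lam) (hth : 0 < th) :
    Continuous (OUphiDeriv2 lam th mu sig) :=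
  continuous_const.mul <| continuous_iff_continuousAt.2 fun x =>
    (hasDerivAt_ouIntegral (p := lam / th - 1 + 2)
      (by linarith [neg_one_lt_div_sub_one hlam hth]) _ _ x).continuousAt

theorem OUphi_ode (hlam : 0 < lam) (hth : 0 < th) (hsig : 0 < sig) (x : ℝ) :
    1 / 2 * sig ^ 2 * OUphiDeriv2 lam th mu sig x + th * (mu - x) * OUphiDeriv lam th mu sig x
      - lam * OUphi lam th mu sig x = 0 := by
  have hrec := ouIntegral_recurrence (neg_one_lt_div_sub_one hlam hth)
    (Real.sqrt (2 * th) / sig) mu x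
  have ha : (Real.sqrt (2 * th) / sig) ^ 2 * sig ^ 2 = 2 * th := by
    rw [div_pow, sq_sqrt (by positivity), div_mul_cancel₀ _ (by positivity)]
  have hp : th * (lam / th - 1 + 1) = lam := by field_simp; ring
  rw [OUphiDeriv2, OUphiDeriv, OUphi_eq_ouIntegral]
  linear_combination th * hrec
    + 1 / 2 * ouIntegral (lam / th - 1 + 2) (Real.sqrt (2 * th) / sig) mu x * ha
    + ouIntegral (lam / th - 1) (Real.sqrt (2 * th) / sig) mu x * hp

end OUphi

noncomputable def stopCoeff (lam th mu sig : ℝ) (Phi : ℝ → ℝ) (b z : ℝ) : ℝ :=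
  Gfun lam th mu Phi b z / OUphi lam th mu sig b

noncomputable def stopValue (lam th mu sig : ℝ) (Phi : ℝ → ℝ) (b x z : ℝ) : ℝ :=
  Gfun lam th mu Phi x z - stopCoeff lam th mu sig Phi b z * OUphi lam th mu sig x

noncomputable def stopValueDeriv (lam th mu sig : ℝ) (Phi : ℝ → ℝ) (b x z : ℝ) : ℝ :=
  kfun lam th Phi z / (lam + th) - stopCoeff lam th mu sig Phi b z * OUphiDeriv lam th mu sig x

noncomputable def stopValueDeriv2 (lam th mu sig : ℝ) (Phi : ℝ → ℝ) (b x z : ℝ) : ℝ :=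
  -(stopCoeff lam th mu sig Phi b z * OUphiDeriv2 lam th mu sig x)

noncomputable def ufunDeriv (lam th mu sig : ℝ) (Phi : ℝ → ℝ) (b x z : ℝ) : ℝ :=
  max (stopValueDeriv lam th mu sig Phi b x z) 0

noncomputable def ufunDeriv2 (lam th mu sig : ℝ) (Phi : ℝ → ℝ) (b x z : ℝ) : ℝ :=
  if b < x then stopValueDeriv2 lam th mu sig Phi b x z else 0

section StoppingProblem

variable {lam th mu sig : ℝ} {Phi : ℝ → ℝ} {b z : ℝ}

theorem Hfun_eq (hlam : 0 < lam) (hth : 0 < th) (x c : ℝ) :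
    Hfun lam th mu sig Phi x c = kfun lam th Phi c / (lam + th) * OUphi lam th mu sig x
      - Gfun lam th mu Phi x c * OUphiDeriv lam th mu sig x := by
  rw [Hfun, deriv_OUphi hlam hth]

theorem hasDerivAt_Gfun (x : ℝ) :
    HasDerivAt (Gfun lam th mu Phi · z) (kfun lam th Phi z / (lam + th)) x := by
  have := ((((hasDerivAt_id x).sub_const mu).const_mul (kfun lam th Phi z)).div_const
    (lam + th)).const_add (mu * (kfun lam th Phi z - th) / lam)
  simp only [id, mul_one] at this
  exact this

theorem Gfun_eq_add (hlam : 0 < lam) (hth : 0 < th) (x : ℝ) :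
    Gfun lam th mu Phi x z = Gfun lam th mu Phi b z + kfun lam th Phi z / (lam + th) * (x - b) := by
  have : lam + th ≠ 0 := by positivity
  unfold Gfun
  field_simp
  ring

theorem generator_Gfun (hlam : 0 < lam) (hth : 0 < th) (x : ℝ) :
    th * (mu - x) * (kfun lam th Phi z / (lam + th)) - lam * Gfun lam th mu Phi x z
      = th * mu - kfun lam th Phi z * x := by
  have : lam + th ≠ 0 := by positivity
  unfold Gfun
  field_simp
  ring

theorem Gfun_neg_of_Hfun_eq_zero (hlam : 0 < lam) (hth : 0 < th) (hsig : 0 < sig)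
    (hkz : 0 < kfun lam th Phi z) (hH : Hfun lam th mu sig Phi b z = 0) :
    Gfun lam th mu Phi b z < 0 := by
  rw [Hfun_eq hlam hth] at hH
  have h1 := OUphi_pos (mu := mu) (sig := sig) hlam hth b
  have h2 := OUphiDeriv_neg (mu := mu) hlam hth hsig b
  have h3 : 0 < kfun lam th Phi z / (lam + th) := by positivity
  nlinarith [mul_pos h3 h1]

theorem stopCoeff_neg (hlam : 0 < lam) (hth : 0 < th) (hsig : 0 < sig)
    (hkz : 0 < kfun lam th Phi z) (hH : Hfun lam th mu sig Phi b z = 0) :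
    stopCoeff lam th mu sig Phi b z < 0 :=
  div_neg_of_neg_of_pos (Gfun_neg_of_Hfun_eq_zero hlam hth hsig hkz hH) (OUphi_pos hlam hth b)

theorem stopValue_self (hlam : 0 < lam) (hth : 0 < th) :
    stopValue lam th mu sig Phi b b z = 0 := by
  rw [stopValue, stopCoeff, div_mul_cancel₀ _ (OUphi_pos hlam hth b).ne', sub_self]

/-- Smooth fit: `H(b; z) = 0` says exactly that `u(·; z)` is `C¹` at `b`. -/
theorem stopValueDeriv_self (hlam : 0 < lam) (hth : 0 < th)
    (hH : Hfun lam th mu sig Phi b z = 0) : stopValueDeriv lam th mu sig Phi b b z = 0 := by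
  have hφ := (OUphi_pos (mu := mu) (sig := sig) hlam hth b).ne'
  have : stopValueDeriv lam th mu sig Phi b b z
      = Hfun lam th mu sig Phi b z / OUphi lam th mu sig b := by
    rw [stopValueDeriv, stopCoeff, Hfun_eq hlam hth]
    field_simp
  rw [this, hH, zero_div]

theorem hasDerivAt_stopValue (hlam : 0 < lam) (hth : 0 < th) (x : ℝ) :
    HasDerivAt (stopValue lam th mu sig Phi b · z) (stopValueDeriv lam th mu sig Phi b x z) x :=
  (hasDerivAt_Gfun x).sub ((hasDerivAt_OUphi hlam hth x).const_mul _)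

theorem hasDerivAt_stopValueDeriv (hlam : 0 < lam) (hth : 0 < th) (x : ℝ) :
    HasDerivAt (stopValueDeriv lam th mu sig Phi b · z)
      (stopValueDeriv2 lam th mu sig Phi b x z) x :=
  ((hasDerivAt_OUphiDeriv hlam hth x).const_mul _).const_sub _

theorem stopValueDeriv2_pos (hlam : 0 < lam) (hth : 0 < th) (hsig : 0 < sig)
    (hkz : 0 < kfun lam th Phi z) (hH : Hfun lam th mu sig Phi b z = 0) (x : ℝ) :
    0 < stopValueDeriv2 lam th mu sig Phi b x z :=
  neg_pos.2 (mul_neg_of_neg_of_pos (stopCoeff_neg hlam hth hsig hkz hH)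
    (OUphiDeriv2_pos hlam hth hsig x))

theorem stopValueDeriv_strictMono (hlam : 0 < lam) (hth : 0 < th) (hsig : 0 < sig)
    (hkz : 0 < kfun lam th Phi z) (hH : Hfun lam th mu sig Phi b z = 0) :
    StrictMono (stopValueDeriv lam th mu sig Phi b · z) :=
  strictMono_of_deriv_pos fun x => (hasDerivAt_stopValueDeriv hlam hth x).deriv ▸
    stopValueDeriv2_pos hlam hth hsig hkz hH x

theorem stopValueDeriv_pos_of_lt (hlam : 0 < lam) (hth : 0 < th) (hsig : 0 < sig)
    (hkz : 0 < kfun lam th Phi z) (hH : Hfun lam th mu sig Phi b z = 0) {x : ℝ} (hx : b < x) :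
    0 < stopValueDeriv lam th mu sig Phi b x z :=
  stopValueDeriv_self hlam hth hH ▸ stopValueDeriv_strictMono hlam hth hsig hkz hH hx

theorem stopValue_nonneg_of_le (hlam : 0 < lam) (hth : 0 < th) (hsig : 0 < sig)
    (hkz : 0 < kfun lam th Phi z) (hH : Hfun lam th mu sig Phi b z = 0) {x : ℝ} (hx : b ≤ x) :
    0 ≤ stopValue lam th mu sig Phi b x z := by
  have hmono : MonotoneOn (stopValue lam th mu sig Phi b · z) (Ici b) :=
    monotoneOn_of_hasDerivWithinAt_nonneg (convex_Ici b)
      (fun x _ => (hasDerivAt_stopValue hlam hth x).continuousAt.continuousWithinAt)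
      (fun x _ => (hasDerivAt_stopValue hlam hth x).hasDerivWithinAt)
      (fun x hx => (stopValueDeriv_pos_of_lt hlam hth hsig hkz hH
        (by rwa [interior_Ici] at hx)).le)
  simpa only [stopValue_self hlam hth] using hmono self_mem_Ici hx hx

theorem ufun_eq_stopValue_max (hlam : 0 < lam) (hth : 0 < th) (x : ℝ) :
    ufun lam th mu sig Phi b x z = stopValue lam th mu sig Phi b (max x b) z := by
  unfold ufun
  split_ifs with h
  · rw [max_eq_left h.le]
    rfl
  · rw [max_eq_right (not_lt.1 h), stopValue_self hlam hth]

theorem ufun_nonneg (hlam : 0 < lam) (hth : 0 < th) (hsig : 0 < sig)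
    (hkz : 0 < kfun lam th Phi z) (hH : Hfun lam th mu sig Phi b z = 0) (x : ℝ) :
    0 ≤ ufun lam th mu sig Phi b x z :=
  ufun_eq_stopValue_max hlam hth x ▸
    stopValue_nonneg_of_le hlam hth hsig hkz hH (le_max_right x b)

theorem ufunDeriv_of_le (hlam : 0 < lam) (hth : 0 < th) (hsig : 0 < sig)
    (hkz : 0 < kfun lam th Phi z) (hH : Hfun lam th mu sig Phi b z = 0) {x : ℝ} (hx : x ≤ b) :
    ufunDeriv lam th mu sig Phi b x z = 0 :=
  max_eq_right <| stopValueDeriv_self hlam hth hH ▸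
    (stopValueDeriv_strictMono hlam hth hsig hkz hH).monotone hx

theorem ufunDeriv_of_ge (hlam : 0 < lam) (hth : 0 < th) (hsig : 0 < sig)
    (hkz : 0 < kfun lam th Phi z) (hH : Hfun lam th mu sig Phi b z = 0) {x : ℝ} (hx : b ≤ x) :
    ufunDeriv lam th mu sig Phi b x z = stopValueDeriv lam th mu sig Phi b x z :=
  max_eq_left <| stopValueDeriv_self hlam hth hH ▸
    (stopValueDeriv_strictMono hlam hth hsig hkz hH).monotone hx

theorem ufun_of_le {x : ℝ} (hx : x ≤ b) : ufun lam th mu sig Phi b x z = 0 :=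
  if_neg (not_lt.2 hx)

theorem ufun_of_ge (hlam : 0 < lam) (hth : 0 < th) {x : ℝ} (hx : b ≤ x) :
    ufun lam th mu sig Phi b x z = stopValue lam th mu sig Phi b x z := by
  rw [ufun_eq_stopValue_max hlam hth, max_eq_left hx]

theorem hasDerivAt_ufun (hlam : 0 < lam) (hth : 0 < th) (hsig : 0 < sig)
    (hkz : 0 < kfun lam th Phi z) (hH : Hfun lam th mu sig Phi b z = 0) (x : ℝ) :
    HasDerivAt (ufun lam th mu sig Phi b · z) (ufunDeriv lam th mu sig Phi b x z) x := by
  have hleft (hx : x ≤ b) : HasDerivWithinAt (ufun lam th mu sig Phi b · z)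
      (ufunDeriv lam th mu sig Phi b x z) (Iic b) x := by
    rw [ufunDeriv_of_le hlam hth hsig hkz hH hx]
    exact (hasDerivWithinAt_const x _ 0).congr (fun y hy => ufun_of_le hy) (ufun_of_le hx)
  have hright (hx : b ≤ x) : HasDerivWithinAt (ufun lam th mu sig Phi b · z)
      (ufunDeriv lam th mu sig Phi b x z) (Ici b) x := by
    rw [ufunDeriv_of_ge hlam hth hsig hkz hH hx]
    exact (hasDerivAt_stopValue hlam hth x).hasDerivWithinAt.congr
      (fun y hy => ufun_of_ge hlam hth hy) (ufun_of_ge hlam hth hx)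
  rcases lt_trichotomy x b with hxb | rfl | hbx
  · exact (hleft hxb.le).hasDerivAt (Iic_mem_nhds hxb)
  · simpa only [Iic_union_Ici, hasDerivWithinAt_univ] using (hleft le_rfl).union (hright le_rfl)
  · exact (hright hbx.le).hasDerivAt (Ici_mem_nhds hbx)

theorem hasDerivAt_ufunDeriv (hlam : 0 < lam) (hth : 0 < th) (hsig : 0 < sig)
    (hkz : 0 < kfun lam th Phi z) (hH : Hfun lam th mu sig Phi b z = 0) {x : ℝ} (hx : x ≠ b) :
    HasDerivAt (ufunDeriv lam th mu sig Phi b · z) (ufunDeriv2 lam th mu sig Phi b x z) x := by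
  rcases hx.lt_or_gt with hxb | hbx
  · rw [ufunDeriv2, if_neg (not_lt.2 hxb.le)]
    exact (hasDerivAt_const x 0).congr_of_eventuallyEq <|
      eventually_of_mem (Iic_mem_nhds hxb) fun y hy => ufunDeriv_of_le hlam hth hsig hkz hH hy
  · rw [ufunDeriv2, if_pos hbx]
    exact (hasDerivAt_stopValueDeriv hlam hth x).congr_of_eventuallyEq <|
      eventually_of_mem (Ici_mem_nhds hbx) fun y hy => ufunDeriv_of_ge hlam hth hsig hkz hH hy

theorem generator_stopValue (hlam : 0 < lam) (hth : 0 < th) (hsig : 0 < sig) (x : ℝ) :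
    1 / 2 * sig ^ 2 * stopValueDeriv2 lam th mu sig Phi b x z
      + th * (mu - x) * stopValueDeriv lam th mu sig Phi b x z
      - lam * stopValue lam th mu sig Phi b x z = th * mu - kfun lam th Phi z * x := by
  unfold stopValueDeriv2 stopValueDeriv stopValue
  linear_combination -stopCoeff lam th mu sig Phi b z * OUphi_ode (mu := mu) hlam hth hsig x
    + generator_Gfun (mu := mu) (Phi := Phi) (z := z) hlam hth x

theorem generator_ufun (hlam : 0 < lam) (hth : 0 < th) (hsig : 0 < sig)
    (hkz : 0 < kfun lam th Phi z) (hH : Hfun lam th mu sig Phi b z = 0) {x : ℝ} (hx : x ≠ b) :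
    1 / 2 * sig ^ 2 * ufunDeriv2 lam th mu sig Phi b x z
      + th * (mu - x) * ufunDeriv lam th mu sig Phi b x z
      - lam * ufun lam th mu sig Phi b x z
      = if b < x then th * mu - kfun lam th Phi z * x else 0 := by
  rcases hx.lt_or_gt with hxb | hbx
  · rw [ufunDeriv2, if_neg (not_lt.2 hxb.le), if_neg (not_lt.2 hxb.le),
      ufunDeriv_of_le hlam hth hsig hkz hH hxb.le, ufun_of_le hxb.le]
    ring
  · rw [ufunDeriv2, if_pos hbx, if_pos hbx, ufunDeriv_of_ge hlam hth hsig hkz hH hbx.le,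
      ufun_of_ge hlam hth hbx.le]
    exact generator_stopValue hlam hth hsig x

theorem lipschitzOnWith_ufunDeriv (hlam : 0 < lam) (hth : 0 < th) {s : Set ℝ}
    (hs : Convex ℝ s) {C : ℝ} (hC : ∀ x ∈ s, |stopValueDeriv2 lam th mu sig Phi b x z| ≤ C) :
    LipschitzOnWith (Real.nnabs C) (ufunDeriv lam th mu sig Phi b · z) s := by
  have hV : LipschitzOnWith (Real.nnabs C) (stopValueDeriv lam th mu sig Phi b · z) s := by
    refine hs.lipschitzOnWith_of_nnnorm_hasDerivWithin_le
      (fun x _ => (hasDerivAt_stopValueDeriv hlam hth x).hasDerivWithinAt) fun x hx => ?_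
    rw [← NNReal.coe_le_coe, coe_nnnorm, Real.coe_nnabs, norm_eq_abs]
    exact (hC x hx).trans (le_abs_self C)
  simpa only [ufunDeriv, one_mul, Function.comp_def, id] using
    (LipschitzWith.id.max_const 0).comp_lipschitzOnWith hV

end StoppingProblem

section FreeBoundary

variable {lam th mu sig : ℝ} {Phi : ℝ → ℝ} {b z : ℝ}

theorem hasDerivAt_Hfun (hlam : 0 < lam) (hth : 0 < th) (x : ℝ) :
    HasDerivAt (Hfun lam th mu sig Phi · z)
      (-(Gfun lam th mu Phi x z * OUphiDeriv2 lam th mu sig x)) x := by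
  rw [show (Hfun lam th mu sig Phi · z) = _ from funext fun x => Hfun_eq hlam hth x z]
  exact (((hasDerivAt_OUphi hlam hth x).const_mul _).sub
    ((hasDerivAt_Gfun x).mul (hasDerivAt_OUphiDeriv hlam hth x))).congr_deriv (by ring)

theorem Gfun_neg_of_le (hlam : 0 < lam) (hth : 0 < th) (hsig : 0 < sig)
    (hkz : 0 < kfun lam th Phi z) (hH : Hfun lam th mu sig Phi b z = 0) {x : ℝ} (hx : x ≤ b) :
    Gfun lam th mu Phi x z < 0 := by
  rw [Gfun_eq_add (b := b) hlam hth]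
  have : 0 ≤ kfun lam th Phi z / (lam + th) := by positivity
  nlinarith [Gfun_neg_of_Hfun_eq_zero hlam hth hsig hkz hH]

theorem Hfun_neg_of_lt (hlam : 0 < lam) (hth : 0 < th) (hsig : 0 < sig)
    (hkz : 0 < kfun lam th Phi z) (hH : Hfun lam th mu sig Phi b z = 0) {x : ℝ} (hx : x < b) :
    Hfun lam th mu sig Phi x z < 0 := by
  have hmono : StrictMonoOn (Hfun lam th mu sig Phi · z) (Iic b) := by
    refine strictMonoOn_of_deriv_pos (convex_Iic b)
      (fun y _ => (hasDerivAt_Hfun hlam hth y).continuousAt.continuousWithinAt) fun y hy => ?_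
    rw [interior_Iic] at hy
    rw [(hasDerivAt_Hfun hlam hth y).deriv, neg_pos]
    exact mul_neg_of_neg_of_pos (Gfun_neg_of_le hlam hth hsig hkz hH (le_of_lt hy))
      (OUphiDeriv2_pos hlam hth hsig y)
  simpa only [hH] using hmono hx.le (mem_Iic.2 le_rfl) hx

theorem Hfun_pos_of_lt (hlam : 0 < lam) (hth : 0 < th) (hsig : 0 < sig)
    (hkz : 0 < kfun lam th Phi z) (hH : Hfun lam th mu sig Phi b z = 0)
    (huniq : ∀ y, Hfun lam th mu sig Phi y z = 0 → y = b) {x : ℝ} (hx : b < x) :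
    0 < Hfun lam th mu sig Phi x z := by
  by_contra! hle
  -- `H` is positive at the zero `w > b` of the affine function `G(·; z)`
  set w := b + -Gfun lam th mu Phi b z * (lam + th) / kfun lam th Phi z with hw
  have hwb : b < w := by
    have := neg_pos.2 (Gfun_neg_of_Hfun_eq_zero hlam hth hsig hkz hH)
    have : 0 < -Gfun lam th mu Phi b z * (lam + th) / kfun lam th Phi z := by positivity
    linarith
  have hHw : 0 < Hfun lam th mu sig Phi w z := by
    have hGw : Gfun lam th mu Phi w z = 0 := by
      rw [Gfun_eq_add (b := b) hlam hth, hw]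
      field_simp
      ring
    rw [Hfun_eq hlam hth, hGw, zero_mul, sub_zero]
    exact mul_pos (by positivity) (OUphi_pos hlam hth w)
  obtain ⟨y, hy, hy0⟩ := intermediate_value_uIcc
    (fun y _ => (hasDerivAt_Hfun (mu := mu) (sig := sig) (Phi := Phi) (z := z) hlam hth y)
      |>.continuousAt.continuousWithinAt) (mem_uIcc.2 (Or.inl ⟨hle, hHw.le⟩))
  rcases mem_uIcc.1 hy with ⟨h1, -⟩ | ⟨h1, -⟩
  · exact (huniq y hy0 ▸ h1).not_gt hx
  · exact (huniq y hy0 ▸ h1).not_gt hwb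

theorem lt_of_Hfun_pos (hlam : 0 < lam) (hth : 0 < th) (hsig : 0 < sig)
    (hkz : 0 < kfun lam th Phi z) (hH : Hfun lam th mu sig Phi b z = 0) {x : ℝ}
    (hx : 0 < Hfun lam th mu sig Phi x z) : b < x := by
  refine lt_of_not_ge fun hxb => hxb.eq_or_lt.elim (fun e => ?_) fun hlt =>
    (Hfun_neg_of_lt hlam hth hsig hkz hH hlt).not_gt hx
  rw [e, hH] at hx
  exact hx.false

theorem lt_of_Hfun_neg (hlam : 0 < lam) (hth : 0 < th) (hsig : 0 < sig)
    (hkz : 0 < kfun lam th Phi z) (hH : Hfun lam th mu sig Phi b z = 0)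
    (huniq : ∀ y, Hfun lam th mu sig Phi y z = 0 → y = b) {x : ℝ}
    (hx : Hfun lam th mu sig Phi x z < 0) : x < b := by
  refine lt_of_not_ge fun hbx => hbx.eq_or_lt.elim (fun e => ?_) fun hlt =>
    (Hfun_pos_of_lt hlam hth hsig hkz hH huniq hlt).not_gt hx
  rw [← e, hH] at hx
  exact hx.false

end FreeBoundary

section Continuity

variable {lam th mu sig : ℝ} {Phi : ℝ → ℝ}

theorem continuous_kfun (hPhi : ContDiff ℝ 1 Phi) : Continuous (kfun lam th Phi) :=
  continuous_const.add (continuous_const.mul (hPhi.continuous_deriv le_rfl))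

theorem continuous_stopCoeff (hlam : 0 < lam) (hth : 0 < th) (hPhi : ContDiff ℝ 1 Phi) :
    Continuous fun p : ℝ × ℝ => stopCoeff lam th mu sig Phi p.1 p.2 := by
  have := continuous_kfun (lam := lam) (th := th) hPhi
  exact Continuous.div (by unfold Gfun; fun_prop) ((continuous_OUphi hlam hth).comp continuous_fst)
    fun p => (OUphi_pos hlam hth p.1).ne'

theorem continuous_ufun (hlam : 0 < lam) (hth : 0 < th) (hPhi : ContDiff ℝ 1 Phi) :
    Continuous fun p : ℝ × ℝ × ℝ => ufun lam th mu sig Phi p.1 p.2.1 p.2.2 := by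
  have := continuous_kfun (lam := lam) (th := th) hPhi
  have := continuous_stopCoeff (mu := mu) (sig := sig) hlam hth hPhi
  have := continuous_OUphi (mu := mu) (sig := sig) hlam hth
  simp only [ufun_eq_stopValue_max hlam hth, stopValue, Gfun]
  fun_prop

theorem continuous_ufunDeriv (hlam : 0 < lam) (hth : 0 < th) (hPhi : ContDiff ℝ 1 Phi) :
    Continuous fun p : ℝ × ℝ × ℝ => ufunDeriv lam th mu sig Phi p.1 p.2.1 p.2.2 := by
  have := continuous_kfun (lam := lam) (th := th) hPhi
  have := continuous_stopCoeff (mu := mu) (sig := sig) hlam hth hPhi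
  have := continuous_OUphiDeriv (mu := mu) (sig := sig) hlam hth
  unfold ufunDeriv stopValueDeriv
  fun_prop

theorem continuous_stopValueDeriv2 (hlam : 0 < lam) (hth : 0 < th) (hPhi : ContDiff ℝ 1 Phi) :
    Continuous fun p : ℝ × ℝ × ℝ => stopValueDeriv2 lam th mu sig Phi p.1 p.2.1 p.2.2 := by
  have := continuous_stopCoeff (mu := mu) (sig := sig) hlam hth hPhi
  have := continuous_OUphiDeriv2 (mu := mu) (sig := sig) hlam hth
  unfold stopValueDeriv2
  fun_prop

theorem continuous_Hfun_right (hPhi : ContDiff ℝ 1 Phi) (x : ℝ) :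
    Continuous (Hfun lam th mu sig Phi x) := by
  have := continuous_kfun (lam := lam) (th := th) hPhi
  unfold Hfun Gfun
  fun_prop

end Continuity

theorem continuousOn_of_unique_zero_Hfun {lam th mu sig : ℝ} {Phi beta : ℝ → ℝ} {s : Set ℝ}
    (hlam : 0 < lam) (hth : 0 < th) (hsig : 0 < sig) (hPhi : ContDiff ℝ 1 Phi)
    (hk : ∀ c ∈ s, 0 < kfun lam th Phi c) (hH : ∀ c ∈ s, Hfun lam th mu sig Phi (beta c) c = 0)
    (huniq : ∀ c ∈ s, ∀ y, Hfun lam th mu sig Phi y c = 0 → y = beta c) :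
    ContinuousOn beta s := by
  -- the sign of `H(a; c)` tells on which side of `β(c)` the point `a` lies
  intro c hc
  have hnear {a : ℝ} {P : ℝ → Prop} (hPo : P (Hfun lam th mu sig Phi a c))
      (hPopen : IsOpen {r | P r}) :
      ∀ᶠ c' in 𝓝[s] c, c' ∈ s ∧ P (Hfun lam th mu sig Phi a c') :=
    eventually_mem_nhdsWithin.and <| ((continuous_Hfun_right hPhi a).continuousAt.eventually
      (hPopen.mem_nhds hPo)).filter_mono nhdsWithin_le_nhds
  refine tendsto_order.2 ⟨fun a ha => ?_, fun a ha => ?_⟩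
  · filter_upwards [hnear (Hfun_neg_of_lt hlam hth hsig (hk c hc) (hH c hc) ha) isOpen_Iio]
      with c' ⟨hc', hneg⟩
    exact lt_of_Hfun_neg hlam hth hsig (hk c' hc') (hH c' hc') (huniq c' hc') hneg
  · filter_upwards [hnear (Hfun_pos_of_lt hlam hth hsig (hk c hc) (hH c hc) (huniq c hc) ha)
      isOpen_Ioi] with c' ⟨hc', hpos⟩
    exact lt_of_Hfun_pos hlam hth hsig (hk c' hc') (hH c' hc') hpos

section ValueFunction

variable {lam th mu sig : ℝ} {Phi beta : ℝ → ℝ} {c : ℝ}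

theorem continuousOn_comp_boundary {g : ℝ × ℝ × ℝ → ℝ} (hg : Continuous g) {s : Set ℝ}
    (hβ : ContinuousOn beta s) :
    ContinuousOn (fun p : ℝ × ℝ => g (beta p.2, p.1, p.2)) (univ ×ˢ s) :=
  hg.comp_continuousOn ((hβ.comp continuousOn_snd fun _ hp => hp.2).prodMk
    (continuousOn_fst.prodMk continuousOn_snd))

theorem continuousOn_comp_boundary_right {g : ℝ × ℝ × ℝ → ℝ} (hg : Continuous g) {s : Set ℝ}
    (hβ : ContinuousOn beta s) (x : ℝ) : ContinuousOn (fun y => g (beta y, x, y)) s :=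
  (continuousOn_comp_boundary hg hβ).comp (continuousOn_const.prodMk continuousOn_id)
    fun _ hy => ⟨trivial, hy⟩

theorem uIcc_subset_Icc_zero_one (hc : c ∈ Icc (0:ℝ) 1) : uIcc c 1 ⊆ Icc 0 1 := by
  rw [uIcc_of_le hc.2]
  exact Icc_subset_Icc_left hc.1

theorem hasDerivAt_Ffun (hlam : 0 < lam) (hth : 0 < th) (hsig : 0 < sig)
    (hPhi : ContDiff ℝ 1 Phi) (hk : ∀ c ∈ Icc (0:ℝ) 1, 0 < kfun lam th Phi c)
    (hH : ∀ c ∈ Icc (0:ℝ) 1, Hfun lam th mu sig Phi (beta c) c = 0)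
    (hβ : ContinuousOn beta (Icc 0 1)) (hc : c ∈ Icc (0:ℝ) 1) (x₀ : ℝ) :
    HasDerivAt (Ffun lam th mu sig Phi beta · c)
      ((1 - c) - ∫ y in c..1, ufunDeriv lam th mu sig Phi (beta y) x₀ y) x₀ := by
  have hsub := uIcc_subset_Icc_zero_one hc
  exact (hasDerivAt_mul_const (1 - c)).sub <| hasDerivAt_intervalIntegral_of_continuousOn
    ((continuousOn_comp_boundary (continuous_ufun hlam hth hPhi) hβ).mono
      (prod_mono subset_rfl hsub))
    ((continuousOn_comp_boundary (continuous_ufunDeriv hlam hth hPhi) hβ).mono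
      (prod_mono subset_rfl hsub))
    (fun y hy x => hasDerivAt_ufun hlam hth hsig (hk y (hsub hy)) (hH y (hsub hy)) x) x₀

theorem hasDerivAt_integral_ufunDeriv (hlam : 0 < lam) (hth : 0 < th) (hsig : 0 < sig)
    (hPhi : ContDiff ℝ 1 Phi) (hk : ∀ c ∈ Icc (0:ℝ) 1, 0 < kfun lam th Phi c)
    (hH : ∀ c ∈ Icc (0:ℝ) 1, Hfun lam th mu sig Phi (beta c) c = 0)
    (hβ : ContinuousOn beta (Icc 0 1)) (hβanti : StrictAntiOn beta (Icc 0 1))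
    (hc : c ∈ Icc (0:ℝ) 1) (x : ℝ) :
    IntervalIntegrable (fun y => ufunDeriv2 lam th mu sig Phi (beta y) x y) volume c 1 ∧
      HasDerivAt (fun x => ∫ y in c..1, ufunDeriv lam th mu sig Phi (beta y) x y)
        (∫ y in c..1, ufunDeriv2 lam th mu sig Phi (beta y) x y) x := by
  have hsub : uIoc c 1 ⊆ Icc 0 1 := uIoc_subset_uIcc.trans (uIcc_subset_Icc_zero_one hc)
  have hV2 := continuousOn_comp_boundary (continuous_stopValueDeriv2 (mu := mu) (sig := sig)
    hlam hth hPhi) hβ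
  obtain ⟨C, hC⟩ := ((isCompact_closedBall x 1).prod isCompact_Icc).exists_bound_of_continuousOn
    (hV2.mono (prod_mono (subset_univ _) subset_rfl))
  have hW1 := continuousOn_comp_boundary_right (continuous_ufunDeriv (mu := mu) (sig := sig)
    hlam hth hPhi) hβ
  refine intervalIntegral.hasDerivAt_integral_of_dominated_loc_of_lip (bound := fun _ => C)
    (ball_mem_nhds x one_pos)
    (Eventually.of_forall fun x' => ((hW1 x').mono hsub).aestronglyMeasurable measurableSet_uIoc)
    (((hW1 x).mono (uIcc_subset_Icc_zero_one hc)).intervalIntegrable)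
    (aestronglyMeasurable_ite_lt_of_antitoneOn measurableSet_uIoc (hβanti.antitoneOn.mono hsub)
      (((continuousOn_comp_boundary_right (continuous_stopValueDeriv2 hlam hth hPhi) hβ x).mono
        hsub).aestronglyMeasurable measurableSet_uIoc) x)
    (Eventually.of_forall fun y hy => lipschitzOnWith_ufunDeriv hlam hth (convex_ball x 1)
      fun x' hx' => hC (x', y) ⟨ball_subset_closedBall hx', hsub hy⟩)
    intervalIntegrable_const ?_
  filter_upwards [ae_ne_of_injOn hβanti.injOn x] with y hy hyc
  exact hasDerivAt_ufunDeriv hlam hth hsig (hk y (hsub hyc)) (hH y (hsub hyc))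
    (hy (hsub hyc)).symm

theorem integral_kfun (hPhi : ContDiff ℝ 1 Phi) (a b : ℝ) :
    ∫ y in a..b, kfun lam th Phi y = (lam + th) * (b - a) + lam * (Phi b - Phi a) := by
  have hd := hPhi.continuous_deriv le_rfl
  simp only [kfun]
  rw [intervalIntegral.integral_add intervalIntegrable_const
      ((hd.intervalIntegrable a b).const_mul lam), intervalIntegral.integral_const,
    intervalIntegral.integral_const_mul, intervalIntegral.integral_deriv_eq_sub
      (fun x _ => (hPhi.differentiable one_ne_zero).differentiableAt) (hd.intervalIntegrable a b),
    smul_eq_mul]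
  ring

theorem generator_Ffun (hlam : 0 < lam) (hth : 0 < th) (hsig : 0 < sig)
    (hPhi : ContDiff ℝ 1 Phi) (hPhi1 : Phi 1 = 0) (hk : ∀ c ∈ Icc (0:ℝ) 1, 0 < kfun lam th Phi c)
    (hH : ∀ c ∈ Icc (0:ℝ) 1, Hfun lam th mu sig Phi (beta c) c = 0)
    (hβ : ContinuousOn beta (Icc 0 1)) (hβanti : StrictAntiOn beta (Icc 0 1))
    (hc : c ∈ Icc (0:ℝ) 1) (x : ℝ) :
    1 / 2 * sig ^ 2 * deriv (deriv (Ffun lam th mu sig Phi beta · c)) x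
      + th * (mu - x) * deriv (Ffun lam th mu sig Phi beta · c) x
      - lam * Ffun lam th mu sig Phi beta x c + lam * x * Phi c
      = ∫ y in c..1, if beta y < x then 0 else th * mu - kfun lam th Phi y * x := by
  have hsub := uIcc_subset_Icc_zero_one hc
  have hF := hasDerivAt_Ffun hlam hth hsig hPhi hk hH hβ hc
  obtain ⟨hW2, hW1'⟩ := hasDerivAt_integral_ufunDeriv hlam hth hsig hPhi hk hH hβ hβanti hc x
  have hFxx : deriv (deriv (Ffun lam th mu sig Phi beta · c)) x
      = -∫ y in c..1, ufunDeriv2 lam th mu sig Phi (beta y) x y := by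
    rw [show deriv (Ffun lam th mu sig Phi beta · c) = _ from funext fun x => (hF x).deriv]
    simpa using (hW1'.const_sub (1 - c)).deriv
  have hW : IntervalIntegrable (fun y => ufun lam th mu sig Phi (beta y) x y) volume c 1 :=
    ((continuousOn_comp_boundary_right (continuous_ufun hlam hth hPhi) hβ x).mono
      hsub).intervalIntegrable
  have hW1 : IntervalIntegrable (fun y => ufunDeriv lam th mu sig Phi (beta y) x y) volume c 1 :=
    ((continuousOn_comp_boundary_right (continuous_ufunDeriv hlam hth hPhi) hβ x).mono
      hsub).intervalIntegrable
  have hkx : IntervalIntegrable (fun y => kfun lam th Phi y * x) volume c 1 :=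
    ((continuous_kfun hPhi).intervalIntegrable _ _).mul_const x
  have hpt : ∀ᵐ y, y ∈ uIoc c 1 → (if beta y < x then 0 else th * mu - kfun lam th Phi y * x)
      = (th * mu - kfun lam th Phi y * x)
        - (1 / 2 * sig ^ 2 * ufunDeriv2 lam th mu sig Phi (beta y) x y
          + th * (mu - x) * ufunDeriv lam th mu sig Phi (beta y) x y
          - lam * ufun lam th mu sig Phi (beta y) x y) := by
    filter_upwards [ae_ne_of_injOn hβanti.injOn x] with y hy hyc
    have hyI := hsub (uIoc_subset_uIcc hyc)
    rw [generator_ufun hlam hth hsig (hk y hyI) (hH y hyI) (hy hyI).symm]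
    split_ifs <;> ring
  rw [intervalIntegral.integral_congr_ae hpt,
    intervalIntegral.integral_sub (intervalIntegrable_const.sub hkx)
      (((hW2.const_mul _).add (hW1.const_mul _)).sub (hW.const_mul _)),
    intervalIntegral.integral_sub intervalIntegrable_const hkx,
    intervalIntegral.integral_sub ((hW2.const_mul _).add (hW1.const_mul _)) (hW.const_mul _),
    intervalIntegral.integral_add (hW2.const_mul _) (hW1.const_mul _),
    intervalIntegral.integral_const, intervalIntegral.integral_mul_const, integral_kfun hPhi,
    intervalIntegral.integral_const_mul, intervalIntegral.integral_const_mul,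
    intervalIntegral.integral_const_mul, hFxx, (hF x).deriv, hPhi1, smul_eq_mul]
  unfold Ffun
  ring

theorem derivWithin_Ffun (hlam : 0 < lam) (hth : 0 < th) (hPhi : ContDiff ℝ 1 Phi)
    (hβ : ContinuousOn beta (Icc 0 1)) (hc : c ∈ Icc (0:ℝ) 1) (x : ℝ) :
    derivWithin (Ffun lam th mu sig Phi beta x ·) (Icc 0 1) c
      = -x + ufun lam th mu sig Phi (beta c) x c := by
  have : Fact (c ∈ Icc (0:ℝ) 1) := ⟨hc⟩
  have hu := continuousOn_comp_boundary_right (continuous_ufun (mu := mu) (sig := sig)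
    hlam hth hPhi) hβ x
  have hint := intervalIntegral.integral_hasDerivWithinAt_left (s := Icc 0 1)
    ((hu.mono (uIcc_subset_Icc_zero_one hc)).intervalIntegrable)
    (hu.stronglyMeasurableAtFilter_nhdsWithin measurableSet_Icc c) (hu c hc)
  have hlin := (((hasDerivAt_id c).const_sub 1).const_mul x).hasDerivWithinAt (s := Icc 0 1)
  refine ((hlin.sub hint).derivWithin (uniqueDiffOn_Icc zero_lt_one c hc)).trans ?_
  simp

theorem integral_excess_nonneg (hk : ∀ c ∈ Icc (0:ℝ) 1, 0 < kfun lam th Phi c)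
    (hβk : ∀ c ∈ Icc (0:ℝ) 1, beta c < th * mu / kfun lam th Phi c) (hc : c ∈ Icc (0:ℝ) 1)
    (x : ℝ) : 0 ≤ ∫ y in c..1, if beta y < x then 0 else th * mu - kfun lam th Phi y * x := by
  refine intervalIntegral.integral_nonneg hc.2 fun y hy => ?_
  have hy01 : y ∈ Icc (0:ℝ) 1 := ⟨hc.1.trans hy.1, hy.2⟩
  have hky := hk y hy01
  have := (lt_div_iff₀ hky).1 (hβk y hy01)
  split_ifs with h
  · exact le_rfl
  · nlinarith [not_lt.1 h]

theorem integral_excess_eq_zero (hβanti : StrictAntiOn beta (Icc 0 1)) (hc : c ∈ Icc (0:ℝ) 1)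
    {x : ℝ} (hx : beta c ≤ x) :
    ∫ y in c..1, (if beta y < x then 0 else th * mu - kfun lam th Phi y * x) = 0 := by
  refine intervalIntegral.integral_zero_ae (Eventually.of_forall fun y hy => if_pos ?_)
  rw [uIoc_of_le hc.2] at hy
  exact (hβanti hc ⟨hc.1.trans hy.1.le, hy.2⟩ hy.1).trans_le hx

end ValueFunction

theorem statement12_general (lam th mu sig : ℝ)
    (hlam : 0 < lam) (hth : 0 < th) (hsig : 0 < sig)
    (Phi : ℝ → ℝ) (hPhiC2 : ContDiff ℝ 2 Phi)
    (hPhi1 : Phi 1 = 0)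
    (hk : ∀ c ∈ Set.Icc (0:ℝ) 1, 0 < kfun lam th Phi c)
    (beta : ℝ → ℝ)
    (hbeta : ∀ c ∈ Set.Icc (0:ℝ) 1, Hfun lam th mu sig Phi (beta c) c = 0 ∧
      beta c < x0fun lam th mu Phi c ∧
      beta c < th * mu / kfun lam th Phi c ∧
      ∀ y : ℝ, Hfun lam th mu sig Phi y c = 0 → y = beta c)
    (hbetadec : StrictAntiOn beta (Set.Icc (0:ℝ) 1)) :
    ∀ x : ℝ, ∀ c ∈ Set.Icc (0:ℝ) 1,
      (-x ≤ derivWithin (fun c => Ffun lam th mu sig Phi beta x c) (Set.Icc (0:ℝ) 1) c) ∧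
      (-(lam * x * Phi c) ≤
        1 / 2 * sig ^ 2 * deriv (deriv (fun x => Ffun lam th mu sig Phi beta x c)) x
          + th * (mu - x) * deriv (fun x => Ffun lam th mu sig Phi beta x c) x
          - lam * Ffun lam th mu sig Phi beta x c) ∧
      (x ≤ beta c →
        derivWithin (fun c => Ffun lam th mu sig Phi beta x c) (Set.Icc (0:ℝ) 1) c = -x) ∧
      (beta c ≤ x →
        1 / 2 * sig ^ 2 * deriv (deriv (fun x => Ffun lam th mu sig Phi beta x c)) x
          + th * (mu - x) * deriv (fun x => Ffun lam th mu sig Phi beta x c) x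
          - lam * Ffun lam th mu sig Phi beta x c
        = -(lam * x * Phi c)) ∧
      (max
        (lam * Ffun lam th mu sig Phi beta x c
          - (1 / 2 * sig ^ 2 * deriv (deriv (fun x => Ffun lam th mu sig Phi beta x c)) x
              + th * (mu - x) * deriv (fun x => Ffun lam th mu sig Phi beta x c) x)
          - lam * x * Phi c)
        (-(derivWithin (fun c => Ffun lam th mu sig Phi beta x c) (Set.Icc (0:ℝ) 1) c) - x)
        = 0) := by
  intro x c hc
  have hPhi : ContDiff ℝ 1 Phi := hPhiC2.of_le one_le_two
  have hH (c) (hc : c ∈ Icc (0:ℝ) 1) := (hbeta c hc).1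
  have hβ : ContinuousOn beta (Icc 0 1) :=
    continuousOn_of_unique_zero_Hfun hlam hth hsig hPhi hk hH fun c hc => (hbeta c hc).2.2.2
  have hFc := derivWithin_Ffun (mu := mu) (sig := sig) hlam hth hPhi hβ hc x
  have hgen := generator_Ffun hlam hth hsig hPhi hPhi1 hk hH hβ hbetadec hc x
  have hu := ufun_nonneg hlam hth hsig (hk c hc) (hH c hc) x
  have hexcess := integral_excess_nonneg hk (fun c hc => (hbeta c hc).2.2.1) hc x
  have hexcess_eq (h : beta c ≤ x) :=
    integral_excess_eq_zero (lam := lam) (th := th) (mu := mu) (Phi := Phi) hbetadec hc h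
  refine ⟨by linarith, by linarith, fun h => by rw [hFc, ufun_of_le h, add_zero],
    fun h => by linarith [hexcess_eq h], ?_⟩
  rw [hFc]
  rcases le_total x (beta c) with h | h
  · rw [ufun_of_le h, max_eq_right (by linarith)]
    ring
  · have := hexcess_eq h
    rw [max_eq_left (by linarith)]
    linarith

/-- assume `k > 0` on `[0,1]`, with `β(c)` the unique zero of `H(·;c)`
(satisfying `β(c) < x₀(c)` and `β(c) < θμ/k(c)`), strictly decreasing in `c`. Then `F` is a
classical solution of the HJB equation: `F_c ≥ -x` and
`(1/2)σ²F_xx + θ(μ-x)F_x - λF ≥ -λxΦ(c)` on `ℝ × [0,1]`, with `F_c = -x` for `x ≤ β(c)`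
and equality in the differential inequality for `x ≥ β(c)`; in particular
`max{λF - (1/2)σ²F_xx - θ(μ-x)F_x - λxΦ(c), -F_c - x} = 0` everywhere on `ℝ × [0,1]`. -/
theorem statement12 (lam th mu sig : ℝ)
    (hlam : 0 < lam) (hth : 0 < th) (hmu : 0 < mu) (hsig : 0 < sig)
    (Phi : ℝ → ℝ) (hPhiC2 : ContDiff ℝ 2 Phi)
    (hPhiconv : StrictConvexOn ℝ Set.univ Phi)
    (hPhi' : ∀ c ∈ Set.Icc (0:ℝ) 1, deriv Phi c < 0) (hPhi1 : Phi 1 = 0)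
    (hk : ∀ c ∈ Set.Icc (0:ℝ) 1, 0 < kfun lam th Phi c)
    (beta : ℝ → ℝ)
    (hbeta : ∀ c ∈ Set.Icc (0:ℝ) 1, Hfun lam th mu sig Phi (beta c) c = 0 ∧
      beta c < x0fun lam th mu Phi c ∧
      beta c < th * mu / kfun lam th Phi c ∧
      ∀ y : ℝ, Hfun lam th mu sig Phi y c = 0 → y = beta c)
    (hbetadec : StrictAntiOn beta (Set.Icc (0:ℝ) 1)) :
    ∀ x : ℝ, ∀ c ∈ Set.Icc (0:ℝ) 1,
      (-x ≤ derivWithin (fun c => Ffun lam th mu sig Phi beta x c) (Set.Icc (0:ℝ) 1) c) ∧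
      (-(lam * x * Phi c) ≤
        1 / 2 * sig ^ 2 * deriv (deriv (fun x => Ffun lam th mu sig Phi beta x c)) x
          + th * (mu - x) * deriv (fun x => Ffun lam th mu sig Phi beta x c) x
          - lam * Ffun lam th mu sig Phi beta x c) ∧
      (x ≤ beta c →
        derivWithin (fun c => Ffun lam th mu sig Phi beta x c) (Set.Icc (0:ℝ) 1) c = -x) ∧
      (beta c ≤ x →
        1 / 2 * sig ^ 2 * deriv (deriv (fun x => Ffun lam th mu sig Phi beta x c)) x
          + th * (mu - x) * deriv (fun x => Ffun lam th mu sig Phi beta x c) x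
          - lam * Ffun lam th mu sig Phi beta x c
        = -(lam * x * Phi c)) ∧
      (max
        (lam * Ffun lam th mu sig Phi beta x c
          - (1 / 2 * sig ^ 2 * deriv (deriv (fun x => Ffun lam th mu sig Phi beta x c)) x
              + th * (mu - x) * deriv (fun x => Ffun lam th mu sig Phi beta x c) x)
          - lam * x * Phi c)
        (-(derivWithin (fun c => Ffun lam th mu sig Phi beta x c) (Set.Icc (0:ℝ) 1) c) - x)
        = 0) :=
  statement12_general lam th mu sig hlam hth hsig Phi hPhiC2 hPhi1 hk beta hbeta hbetadec
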